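/- The computable curve neighborhood agrees with the abstract one: for all u ∈ D∞ and d ∈ ℕ², the finset obtained by filtering the elements of length at most d₀ + d₁ + 1 by the conditions cLength(u·v) = cLength(u) + cLength(v) and φ(v) ≤ d, taking length-maximal elements, and left-multiplying by u, coincides (as a set) with Γ_d(u). -/

import Mathlib

open DihedralGroup CoxeterSystem

/-- The infinite dihedral group `D∞`, realized as `DihedralGroup 0`. -/
abbrev Dinf := DihedralGroup 0

/-- View an element of `ZMod 0` as an integer. -/
def toInt (k : ZMod 0) : ℤ := k

/-- The Coxeter matrix of type `A₁⁽¹⁾`: diagonal entries `1`, off-diagonal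
entries `0` (encoding infinite order). -/
def Mmat : CoxeterMatrix (Fin 2) where
  M := !![1, 0; 0, 1]
  isSymm := by decide
  diagonal := by decide
  off_diagonal := by
    intro i i' h
    fin_cases i <;> fin_cases i' <;> first | exact absurd rfl h | decide | simp

/-- The generator index `0` (resp. `1`) corresponds to the geometric
reflection `s₀ = sr 0` (resp. `s₁ = sr 1`). -/
def toGen : Fin 2 → Dinf := fun i => if i = 0 then sr 0 else sr 1

/-- The product in `D∞` of a word in the two generators `s₀, s₁`. -/
def wprod (w : List (Fin 2)) : Dinf := (w.map toGen).prod

/-- The explicit reduced word (an alternating word in `s₀` and `s₁`) for an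
element of `D∞`. -/
def reducedWord : Dinf → List (Fin 2)
  | .r k => if 0 ≤ toInt k then alternatingWord 0 1 (2 * (toInt k).natAbs)
      else alternatingWord 1 0 (2 * (toInt k).natAbs)
  | .sr k => if 0 < toInt k then alternatingWord 0 1 (2 * (toInt k).natAbs - 1)
      else alternatingWord 1 0 (2 * (toInt k).natAbs + 1)

/-- The degree map `φ : D∞ → ℕ²`, counting occurrences of `s₀` and of `s₁` in
a reduced word. -/
def φ (g : Dinf) : ℕ × ℕ := ((reducedWord g).count 0, (reducedWord g).count 1)

/-- The explicit (computable) length function on `D∞`. -/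
def cLength : Dinf → ℕ
  | .r k => 2 * (toInt k).natAbs
  | .sr k => if 0 < toInt k then 2 * (toInt k).natAbs - 1 else 2 * (toInt k).natAbs + 1

/-- `t` is a reflection of `D∞`, i.e. an element of the form `sr k`. -/
def IsReflectionD (t : Dinf) : Prop := ∃ k, t = sr k

/-- The moment graph of `D∞` has an edge `u → v` of degree `α` iff
`v = u * s_α` where `s_α` is the (root) reflection of degree `α`. -/
def IsEdge (u v : Dinf) (α : ℕ × ℕ) : Prop := ∃ t : Dinf, IsReflectionD t ∧ φ t = α ∧ v = u * t

/-- Increasing chains in the moment graph of `D∞`: the Coxeter length strictly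
increases along each edge, and the degree of the chain is the sum of the
degrees of its edges. -/
inductive Chain (cs : CoxeterSystem Mmat Dinf) : Dinf → Dinf → ℕ × ℕ → Prop where
  | refl (u : Dinf) : Chain cs u u 0
  | step {u v w : Dinf} {d α : ℕ × ℕ} : Chain cs u v d → IsEdge v w α →
      cs.length v < cs.length w → Chain cs u w (d + α)

/-- Bruhat order on `D∞`: `u ≤ v` iff there is an increasing chain from `u`
to `v` in the moment graph. -/
def BruhatLE (cs : CoxeterSystem Mmat Dinf) (u v : Dinf) : Prop := ∃ d, Chain cs u v d

/-- Strict Bruhat order on `D∞`. -/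
def BruhatLT (cs : CoxeterSystem Mmat Dinf) (u v : Dinf) : Prop :=
  BruhatLE cs u v ∧ u ≠ v

/-- `v` is reachable from `u` by an increasing chain of degree at most `d`. -/
def Reachable (cs : CoxeterSystem Mmat Dinf) (u : Dinf) (d : ℕ × ℕ) (v : Dinf) : Prop :=
  ∃ d', d' ≤ d ∧ Chain cs u v d'

/-- The algebraic set `A_d(u) = { v | ℓ(uv) = ℓ(u) + ℓ(v), φ(v) ≤ d }`. -/
def Ad (cs : CoxeterSystem Mmat Dinf) (u : Dinf) (d : ℕ × ℕ) : Set Dinf :=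
  { v | cs.length (u * v) = cs.length u + cs.length v ∧ φ v ≤ d }

/-- `w` is maximal in `S` with respect to the Bruhat order. -/
def IsMaximalIn (cs : CoxeterSystem Mmat Dinf) (w : Dinf) (S : Set Dinf) : Prop :=
  w ∈ S ∧ ∀ v ∈ S, ¬ BruhatLT cs w v

/-- The combinatorial curve neighborhood `Γ_d(u)`: the Bruhat-maximal elements
among those reachable from `u` by an increasing chain of degree `≤ d`. -/
def CurveNeighborhood (cs : CoxeterSystem Mmat Dinf) (u : Dinf) (d : ℕ × ℕ) : Set Dinf :=
  { v | Reachable cs u d v ∧ ∀ v', Reachable cs u d v' → ¬ BruhatLT cs v v' }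

/-- The finset of products of the two alternating words of each length `k ≤ n`. -/
def enumerateD (n : ℕ) : Finset Dinf :=
  ((List.range (n + 1)).flatMap fun k =>
    [wprod (alternatingWord 0 1 k), wprod (alternatingWord 1 0 k)]).toFinset

/-- The computable curve neighborhood: filter the elements of length at most
`d₀ + d₁ + 1` by the defining conditions of `A_d(u)` (using the computable
length `cLength`), take the length-maximal elements, and multiply by `u`. -/
def CurveNeighborhoodComputable (u : Dinf) (d : ℕ × ℕ) : Finset Dinf :=
  let A := (enumerateD (d.1 + d.2 + 1)).filter
    (fun v => cLength (u * v) = cLength u + cLength v ∧ φ v ≤ d)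
  (A.filter (fun w => ∀ w' ∈ A, ¬ (cLength w < cLength w'))).image (fun w => u * w)

set_option maxHeartbeats 1000000

namespace CNaux
def ee : Dinf → ℤ
  | .r k => 2 * toInt k
  | .sr k => 2 * toInt k - 1

lemma toInt_inj {a b : ZMod 0} (h : toInt a = toInt b) : a = b := h

lemma toInt_sub (a b : ZMod 0) : toInt (a - b) = toInt a - toInt b := rfl
lemma toInt_add (a b : ZMod 0) : toInt (a + b) = toInt a + toInt b := rfl

lemma ee_inj : Function.Injective ee := by
  intro g h
  cases g with
  | r k => cases h with
    | r l => simp only [ee]; intro hh; exact congrArg _ (toInt_inj (by omega))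
    | sr l => simp only [ee]; intro hh; omega
  | sr k => cases h with
    | r l => simp only [ee]; intro hh; omega
    | sr l => simp only [ee]; intro hh; exact congrArg _ (toInt_inj (by omega))

def einv (y : ℤ) : Dinf := if y % 2 = 0 then .r (y/2) else .sr ((y+1)/2)

lemma ee_einv (y : ℤ) : ee (einv y) = y := by
  unfold einv
  split
  · show 2 * (y/2) = y; omega
  · show 2 * ((y+1)/2) - 1 = y; omega

lemma einv_ee (g : Dinf) : einv (ee g) = g := ee_inj (ee_einv _)

lemma cLength_eq (g : Dinf) : cLength g = (ee g).natAbs := by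
  cases g with
  | r k => show 2 * (toInt k).natAbs = (2 * toInt k).natAbs; omega
  | sr k =>
    show (if 0 < toInt k then 2 * (toInt k).natAbs - 1 else 2 * (toInt k).natAbs + 1)
      = (2 * toInt k - 1).natAbs
    split <;> omega

lemma ee_mul_sr (g : Dinf) (m : ZMod 0) : ee (g * .sr m) = (2 * toInt m - 1) - ee g := by
  cases g with
  | r k =>
    rw [r_mul_sr]
    show 2 * toInt (m - k) - 1 = (2 * toInt m - 1) - (2 * toInt k)
    show 2 * (toInt m - toInt k) - 1 = _
    ring
  | sr k =>
    rw [sr_mul_sr]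
    show 2 * toInt (m - k) = (2 * toInt m - 1) - (2 * toInt k - 1)
    show 2 * (toInt m - toInt k) = _
    ring

lemma ee_mul_r (g : Dinf) (m : ZMod 0) : ee (g * .r m) = ee g + 2 * toInt m := by
  cases g with
  | r k =>
    rw [r_mul_r]
    show 2 * toInt (k + m) = 2 * toInt k + 2 * toInt m
    show 2 * (toInt k + toInt m) = _
    ring
  | sr k =>
    rw [sr_mul_r]
    show 2 * toInt (k + m) - 1 = (2 * toInt k - 1) + 2 * toInt m
    show 2 * (toInt k + toInt m) - 1 = _
    ring

/-- degree of element with coordinate `y` -/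
def Φf (y : ℤ) : ℕ × ℕ :=
  (y.natAbs / 2 + (if y % 2 ≠ 0 ∧ y < 0 then 1 else 0),
   y.natAbs / 2 + (if y % 2 ≠ 0 ∧ 0 < y then 1 else 0))

/-- coordinate of `u * w` given coordinates of `u` and `w` -/
def zz (x y : ℤ) : ℤ := if y % 2 = 0 then x + y else y - x

lemma ee_mul (u w : Dinf) : ee (u * w) = zz (ee u) (ee w) := by
  cases w with
  | r m =>
    show ee (u * r m) = zz (ee u) (2 * toInt m)
    rw [ee_mul_r, zz, if_pos (by omega : (2 * toInt m) % 2 = 0)]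
  | sr m =>
    show ee (u * sr m) = zz (ee u) (2 * toInt m - 1)
    rw [ee_mul_sr, zz, if_neg (by omega : ¬ (2 * toInt m - 1) % 2 = 0)]

lemma toGen_zero : toGen 0 = sr 0 := rfl
lemma toGen_one : toGen 1 = sr 1 := rfl

lemma wprod_nil : wprod [] = 1 := rfl
lemma wprod_concat (l : List (Fin 2)) (i : Fin 2) :
    wprod (l.concat i) = wprod l * toGen i := by
  simp [wprod]

lemma ee_toGen_mul (i : Fin 2) (g : Dinf) :
    ee (g * toGen i) = (if i = 0 then -1 else 1) - ee g := by
  fin_cases i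
  · show ee (g * toGen 0) = (if (0 : Fin 2) = 0 then -1 else 1) - ee g
    rw [toGen_zero, ee_mul_sr]; norm_num; rfl
  · show ee (g * toGen 1) = (if (1 : Fin 2) = 0 then -1 else 1) - ee g
    rw [toGen_one, ee_mul_sr]
    have h1 : toInt 1 = 1 := rfl
    rw [h1]; norm_num

lemma wprod_aw (n : ℕ) :
    wprod (alternatingWord 0 1 n) = einv n ∧ wprod (alternatingWord 1 0 n) = einv (-(n:ℤ)) := by
  induction n with
  | zero =>
    constructor <;>
    · show (1 : Dinf) = einv 0
      apply ee_inj; rw [ee_einv]; rfl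
  | succ n ih =>
    constructor
    · rw [alternatingWord_succ, wprod_concat, ih.2]
      apply ee_inj
      rw [ee_toGen_mul, ee_einv, ee_einv]
      norm_num
      omega
    · rw [alternatingWord_succ, wprod_concat, ih.1]
      apply ee_inj
      rw [ee_toGen_mul, ee_einv, ee_einv]
      norm_num
      omega

lemma count_aw (n : ℕ) :
    ((alternatingWord (0:Fin 2) 1 n).count 0 = n/2 ∧ (alternatingWord (0:Fin 2) 1 n).count 1 = (n+1)/2)
    ∧ ((alternatingWord (1:Fin 2) 0 n).count 0 = (n+1)/2 ∧ (alternatingWord (1:Fin 2) 0 n).count 1 = n/2) := by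
  induction n with
  | zero => simp [alternatingWord]
  | succ n ih =>
    rw [alternatingWord_succ, alternatingWord_succ]
    simp only [List.concat_eq_append, List.count_append]
    simp [List.count_singleton, ih.1.1, ih.1.2, ih.2.1, ih.2.2]
    omega

lemma reducedWord_r (k : ZMod 0) : reducedWord (.r k) =
    (if 0 ≤ toInt k then alternatingWord 0 1 (2 * (toInt k).natAbs)
      else alternatingWord 1 0 (2 * (toInt k).natAbs)) := rfl

lemma reducedWord_sr (k : ZMod 0) : reducedWord (.sr k) =
    (if 0 < toInt k then alternatingWord 0 1 (2 * (toInt k).natAbs - 1)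
      else alternatingWord 1 0 (2 * (toInt k).natAbs + 1)) := rfl

lemma φ_eq (g : Dinf) : φ g = Φf (ee g) := by
  cases g with
  | r k =>
    show φ (.r k) = Φf (2 * toInt k)
    unfold φ
    rw [reducedWord_r]
    split
    · rw [(count_aw _).1.1, (count_aw _).1.2]
      unfold Φf
      have h2 : ¬ ((2 * toInt k) % 2 ≠ 0 ∧ (2 * toInt k) < 0) := by omega
      have h3 : ¬ ((2 * toInt k) % 2 ≠ 0 ∧ 0 < (2 * toInt k)) := by omega
      rw [if_neg h2, if_neg h3, Prod.mk.injEq]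
      omega
    · rw [(count_aw _).2.1, (count_aw _).2.2]
      unfold Φf
      have h2 : ¬ ((2 * toInt k) % 2 ≠ 0 ∧ (2 * toInt k) < 0) := by omega
      have h3 : ¬ ((2 * toInt k) % 2 ≠ 0 ∧ 0 < (2 * toInt k)) := by omega
      rw [if_neg h2, if_neg h3, Prod.mk.injEq]
      omega
  | sr k =>
    show φ (.sr k) = Φf (2 * toInt k - 1)
    unfold φ
    rw [reducedWord_sr]
    split
    · rename_i hk
      rw [(count_aw _).1.1, (count_aw _).1.2]
      unfold Φf
      have h2 : ¬ ((2 * toInt k - 1) % 2 ≠ 0 ∧ (2 * toInt k - 1) < 0) := by omega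
      have h3 : ((2 * toInt k - 1) % 2 ≠ 0 ∧ 0 < (2 * toInt k - 1)) := by omega
      rw [if_neg h2, if_pos h3, Prod.mk.injEq]
      omega
    · rename_i hk
      rw [(count_aw _).2.1, (count_aw _).2.2]
      unfold Φf
      have h2 : ((2 * toInt k - 1) % 2 ≠ 0 ∧ (2 * toInt k - 1) < 0) := by omega
      have h3 : ¬ ((2 * toInt k - 1) % 2 ≠ 0 ∧ 0 < (2 * toInt k - 1)) := by omega
      rw [if_pos h2, if_neg h3, Prod.mk.injEq]
      omega

lemma wprod_reducedWord (g : Dinf) : wprod (reducedWord g) = g := by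
  cases g with
  | r k =>
    show wprod (reducedWord (.r k)) = _
    rw [reducedWord_r]
    split <;> [rw [(wprod_aw _).1]; rw [(wprod_aw _).2]] <;>
    · apply ee_inj
      rw [ee_einv]
      show _ = 2 * toInt k
      omega
  | sr k =>
    show wprod (reducedWord (.sr k)) = _
    rw [reducedWord_sr]
    split <;> [rw [(wprod_aw _).1]; rw [(wprod_aw _).2]] <;>
    · apply ee_inj
      rw [ee_einv]
      show _ = 2 * toInt k - 1
      omega

lemma length_reducedWord (g : Dinf) : (reducedWord g).length = cLength g := by
  cases g with
  | r k =>
    show (reducedWord (.r k)).length = 2 * (toInt k).natAbs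
    rw [reducedWord_r]
    split <;> rw [length_alternatingWord]
  | sr k =>
    show (reducedWord (.sr k)).length =
      (if 0 < toInt k then 2 * (toInt k).natAbs - 1 else 2 * (toInt k).natAbs + 1)
    rw [reducedWord_sr]
    split <;> rw [length_alternatingWord] <;> split <;> omega

lemma cLength_toGen_mul (i : Fin 2) (g : Dinf) :
    cLength (g * toGen i) ≤ cLength g + 1 := by
  rw [cLength_eq, cLength_eq, ee_toGen_mul]
  split <;> omega

lemma cLength_wprod_le (w : List (Fin 2)) : cLength (wprod w) ≤ w.length := by
  induction w using List.reverseRecOn with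
  | nil => show cLength 1 ≤ 0; rfl
  | append_singleton l i ih =>
    rw [← List.concat_eq_append, wprod_concat, List.length_concat]
    exact le_trans (cLength_toGen_mul i _) (by omega)

section withcs
variable (cs : CoxeterSystem Mmat Dinf)
  (h0 : cs.simple 0 = sr 0) (h1 : cs.simple 1 = sr 1)

include h0 h1

lemma wordProd_eq_wprod (w : List (Fin 2)) : cs.wordProd w = wprod w := by
  induction w with
  | nil => rw [cs.wordProd_nil]; rfl
  | cons i l ih =>
    rw [cs.wordProd_cons, ih]
    have : cs.simple i * wprod l = toGen i * wprod l := by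
      fin_cases i
      · show cs.simple 0 * wprod l = toGen 0 * wprod l
        rw [h0]; rfl
      · show cs.simple 1 * wprod l = toGen 1 * wprod l
        rw [h1]; rfl
    rw [this]
    show _ = (List.map toGen (i :: l)).prod
    rw [List.map_cons, List.prod_cons]
    rfl

lemma len_eq (g : Dinf) : cs.length g = cLength g := by
  apply le_antisymm
  · have : g = cs.wordProd (reducedWord g) := by
      rw [wordProd_eq_wprod cs h0 h1, wprod_reducedWord]
    calc cs.length g = cs.length (cs.wordProd (reducedWord g)) := by rw [← this]
    _ ≤ (reducedWord g).length := cs.length_wordProd_le _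
    _ = cLength g := length_reducedWord g
  · obtain ⟨w, hw, hg⟩ := cs.exists_reduced_word g
    calc cLength g = cLength (wprod w) := by rw [hg, wordProd_eq_wprod cs h0 h1]
    _ ≤ w.length := cLength_wprod_le w
    _ = cs.length g := by rw [hg]; unfold CoxeterSystem.IsReduced at hw; exact hw.symm

end withcs
def UU (x : ℤ) (a b : ℕ) : ℤ :=
  if 0 < x then x + 2 * min a b
  else if x < 0 then (if b = 0 then x else -x + 2 * min a (b - 1) + 1)
  else (if a < b then 2 * a + 1 else 2 * b)
def DD (x : ℤ) (a b : ℕ) : ℤ := UU (-x) b a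

lemma UU_cases (x : ℤ) (a b : ℕ) :
    (0 < x ∧ UU x a b = x + 2 * min a b) ∨
    (x < 0 ∧ b = 0 ∧ UU x a b = x) ∨
    (x < 0 ∧ 0 < b ∧ UU x a b = -x + 2 * min a (b - 1) + 1) ∨
    (x = 0 ∧ UU x a b = min (2 * (a:ℤ) + 1) (2 * b)) := by
  unfold UU; split_ifs <;> omega

lemma Φf_cases (y : ℤ) :
    (y % 2 = 0 ∧ 2 * (Φf y).1 = y.natAbs ∧ 2 * (Φf y).2 = y.natAbs) ∨
    (y % 2 ≠ 0 ∧ 0 < y ∧ 2 * (Φf y).1 = y.natAbs - 1 ∧ 2 * (Φf y).2 = y.natAbs + 1) ∨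
    (y % 2 ≠ 0 ∧ y < 0 ∧ 2 * (Φf y).1 = y.natAbs + 1 ∧ 2 * (Φf y).2 = y.natAbs - 1) := by
  unfold Φf; simp only; split_ifs <;> omega

lemma le_UU (x : ℤ) (a b : ℕ) : x ≤ UU x a b ∧ -x ≤ DD x a b := by
  unfold DD UU; split_ifs <;> omega

lemma step_core (x μ : ℤ) (A B : ℕ) (hμ : μ % 2 ≠ 0) (hlt : x.natAbs < (μ - x).natAbs)
    (hp : (Φf μ).1 ≤ A) (hq : (Φf μ).2 ≤ B) :
    UU (μ - x) (A - (Φf μ).1) (B - (Φf μ).2) ≤ UU x A B ∧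
    DD (μ - x) (A - (Φf μ).1) (B - (Φf μ).2) ≤ DD x A B := by
  have hf := Φf_cases μ
  have h1 := UU_cases (μ - x) (A - (Φf μ).1) (B - (Φf μ).2)
  have h2 := UU_cases x A B
  have h3 := UU_cases (-(μ - x)) (B - (Φf μ).2) (A - (Φf μ).1)
  have h4 := UU_cases (-x) B A
  unfold DD
  omega
lemma zz_cases (x y : ℤ) :
    (y % 2 = 0 ∧ zz x y = x + y) ∨ (y % 2 ≠ 0 ∧ zz x y = y - x) := by
  unfold zz; split_ifs <;> omega

def Ep (x : ℤ) (a b : ℕ) (y : ℤ) : Prop :=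
  y.natAbs ≤ a + b + 1 ∧ (zz x y).natAbs = x.natAbs + y.natAbs ∧
    (Φf y).1 ≤ a ∧ (Φf y).2 ≤ b

lemma Ep_bound {x : ℤ} {a b : ℕ} {y : ℤ} (h : Ep x a b y) :
    zz x y ≤ UU x a b ∧ -(zz x y) ≤ DD x a b := by
  obtain ⟨h1, h2, h3, h4⟩ := h
  have hf := Φf_cases y
  have hz := zz_cases x y
  have hu := UU_cases x a b
  have hd := UU_cases (-x) b a
  unfold DD
  omega

def yU (x : ℤ) (a b : ℕ) : ℤ :=
  if (UU x a b - x) % 2 = 0 then UU x a b - x else UU x a b + x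
def yD (x : ℤ) (a b : ℕ) : ℤ :=
  if (DD x a b + x) % 2 = 0 then -(DD x a b) - x else -(DD x a b) + x

lemma wit_U (x : ℤ) (a b : ℕ) : Ep x a b (yU x a b) ∧ zz x (yU x a b) = UU x a b := by
  have hu := UU_cases x a b
  have hy : ((UU x a b - x) % 2 = 0 ∧ yU x a b = UU x a b - x) ∨
      ((UU x a b - x) % 2 ≠ 0 ∧ yU x a b = UU x a b + x) := by
    unfold yU; split_ifs <;> omega
  have hz := zz_cases x (yU x a b)
  have hf := Φf_cases (yU x a b)
  unfold Ep
  omega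

lemma wit_D (x : ℤ) (a b : ℕ) : Ep x a b (yD x a b) ∧ zz x (yD x a b) = -(DD x a b) := by
  have hu := UU_cases (-x) b a
  have hy : ((DD x a b + x) % 2 = 0 ∧ yD x a b = -(DD x a b) - x) ∨
      ((DD x a b + x) % 2 ≠ 0 ∧ yD x a b = -(DD x a b) + x) := by
    unfold yD; split_ifs <;> omega
  have hz := zz_cases x (yD x a b)
  have hf := Φf_cases (yD x a b)
  unfold Ep yD at *
  unfold DD at *
  omega
lemma mem_enum (n : ℕ) (w : Dinf) : w ∈ enumerateD n ↔ (ee w).natAbs ≤ n := by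
  unfold enumerateD
  rw [List.mem_toFinset, List.mem_flatMap]
  constructor
  · rintro ⟨k, hk, hw⟩
    rw [List.mem_range] at hk
    rw [(wprod_aw k).1, (wprod_aw k).2] at hw
    simp only [List.mem_cons, List.mem_singleton, List.not_mem_nil, or_false] at hw
    rcases hw with rfl | rfl <;> rw [ee_einv] <;> omega
  · intro h
    refine ⟨(ee w).natAbs, List.mem_range.mpr (by omega), ?_⟩
    rw [(wprod_aw _).1, (wprod_aw _).2]
    simp only [List.mem_cons, List.mem_singleton, List.not_mem_nil, or_false]
    rcases le_or_gt 0 (ee w) with hw | hw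
    · left
      apply ee_inj
      rw [ee_einv]
      omega
    · right
      apply ee_inj
      rw [ee_einv]
      omega
section withcs
variable {cs : CoxeterSystem Mmat Dinf}
  (h0 : cs.simple 0 = sr 0) (h1 : cs.simple 1 = sr 1)

include h0 h1

lemma edge_iff {u v : Dinf} {α : ℕ × ℕ} :
    IsEdge u v α ↔ ((ee u + ee v) % 2 ≠ 0 ∧ α = Φf (ee u + ee v)) := by
  constructor
  · rintro ⟨t, ⟨m, rfl⟩, rfl, rfl⟩
    rw [φ_eq, ee_mul_sr]
    constructor
    · omega
    · congr 1
      show 2 * toInt m - 1 = _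
      ring
  · rintro ⟨hodd, rfl⟩
    refine ⟨.sr ((ee u + ee v + 1) / 2), ⟨_, rfl⟩, ?_, ?_⟩
    · rw [φ_eq]
      congr 1
      show 2 * ((ee u + ee v + 1) / 2) - 1 = ee u + ee v
      omega
    · apply ee_inj
      rw [ee_mul_sr]
      show ee v = 2 * ((ee u + ee v + 1) / 2) - 1 - ee u
      omega

lemma chain_bound {u v : Dinf} {dd : ℕ × ℕ} (h : Chain cs u v dd) :
    ∀ A B : ℕ, dd.1 ≤ A → dd.2 ≤ B →
      UU (ee v) (A - dd.1) (B - dd.2) ≤ UU (ee u) A B ∧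
      DD (ee v) (A - dd.1) (B - dd.2) ≤ DD (ee u) A B := by
  induction h with
  | refl => intro A B _ _; simp
  | @step v w dd α hc he hlen ih =>
    intro A B hA hB
    obtain ⟨hodd, rfl⟩ := (edge_iff h0 h1).mp he
    have hlen' : (ee v).natAbs < (ee w).natAbs := by
      rw [len_eq cs h0 h1, len_eq cs h0 h1, cLength_eq, cLength_eq] at hlen
      exact hlen
    have hadd1 : (dd + Φf (ee v + ee w)).1 = dd.1 + (Φf (ee v + ee w)).1 := rfl
    have hadd2 : (dd + Φf (ee v + ee w)).2 = dd.2 + (Φf (ee v + ee w)).2 := rfl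
    rw [hadd1] at hA
    rw [hadd2] at hB
    have ih' := ih A B (by omega) (by omega)
    have hs := step_core (ee v) (ee v + ee w) (A - dd.1) (B - dd.2) hodd
      (by have : ee v + ee w - ee v = ee w := by ring
          rw [this]; exact hlen')
      (by omega) (by omega)
    have hrw : ee v + ee w - ee v = ee w := by ring
    rw [hrw] at hs
    have e1 : A - dd.1 - (Φf (ee v + ee w)).1 = A - (dd + Φf (ee v + ee w)).1 := by
      rw [hadd1]; omega
    have e2 : B - dd.2 - (Φf (ee v + ee w)).2 = B - (dd + Φf (ee v + ee w)).2 := by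
      rw [hadd2]; omega
    rw [e1, e2] at hs
    exact ⟨le_trans hs.1 ih'.1, le_trans hs.2 ih'.2⟩

lemma reach_bound {u v : Dinf} {a b : ℕ} (h : Reachable cs u (a, b) v) :
    ee v ≤ UU (ee u) a b ∧ -(ee v) ≤ DD (ee u) a b := by
  obtain ⟨dd, hdd, hc⟩ := h
  have hb := chain_bound h0 h1 hc a b hdd.1 hdd.2
  have h1 := le_UU (ee v) (a - dd.1) (b - dd.2)
  exact ⟨le_trans h1.1 hb.1, le_trans h1.2 hb.2⟩

lemma chain_snoc {u v : Dinf} {dd : ℕ × ℕ} (h : Chain cs u v dd) (w : Dinf)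
    (hodd : (ee v + ee w) % 2 ≠ 0) (hlt : (ee v).natAbs < (ee w).natAbs) :
    Chain cs u w (dd + Φf (ee v + ee w)) :=
  Chain.step h ((edge_iff h0 h1).mpr ⟨hodd, rfl⟩)
    (by rw [len_eq cs h0 h1, len_eq cs h0 h1, cLength_eq, cLength_eq]; exact hlt)

lemma S1 {u v : Dinf} {dd : ℕ × ℕ} (h : Chain cs u v dd) (hv : 0 ≤ ee v) :
    Chain cs u (einv (-(ee v) - 1)) (dd + (1, 0)) := by
  have h2 := chain_snoc h0 h1 h (einv (-(ee v) - 1))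
    (by rw [ee_einv]; omega) (by rw [ee_einv]; omega)
  rw [ee_einv, show ee v + (-(ee v) - 1) = -1 by ring] at h2
  have : Φf (-1) = (1, 0) := by unfold Φf; norm_num
  rwa [this] at h2

lemma S2 {u v : Dinf} {dd : ℕ × ℕ} (h : Chain cs u v dd) (hv : ee v ≤ 0) :
    Chain cs u (einv (-(ee v) + 1)) (dd + (0, 1)) := by
  have h2 := chain_snoc h0 h1 h (einv (-(ee v) + 1))
    (by rw [ee_einv]; omega) (by rw [ee_einv]; omega)
  rw [ee_einv, show ee v + (-(ee v) + 1) = 1 by ring] at h2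
  have : Φf (1) = (0, 1) := by unfold Φf; norm_num
  rwa [this] at h2

lemma zig {u v : Dinf} {dd : ℕ × ℕ} (h : Chain cs u v dd) (hv : 0 ≤ ee v) (k : ℕ) :
    Chain cs u (einv (ee v + 2 * k)) (dd + (k, k)) := by
  induction k with
  | zero =>
    have h1 : einv (ee v + 2 * (0:ℕ)) = v := by
      rw [show ee v + 2 * ((0:ℕ):ℤ) = ee v by push_cast; ring, einv_ee]
    have h2 : dd + ((0:ℕ), (0:ℕ)) = dd := by ext <;> simp
    rw [h1, h2]; exact h
  | succ k ih =>
    have hs1 := S1 h0 h1 ih (by rw [ee_einv]; positivity)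
    rw [ee_einv] at hs1
    have hs2 := S2 h0 h1 hs1 (by rw [ee_einv]; omega)
    rw [ee_einv] at hs2
    have e1 : -(-(ee v + 2 * k) - 1) + 1 = ee v + 2 * (k+1 : ℕ) := by push_cast; ring
    have e2 : dd + ((k:ℕ), (k:ℕ)) + (1, 0) + (0, 1) = dd + (k+1, k+1) := by
      ext <;> simp <;> omega
    rw [e1, e2] at hs2
    exact hs2

lemma zag {u v : Dinf} {dd : ℕ × ℕ} (h : Chain cs u v dd) (hv : ee v ≤ 0) (k : ℕ) :
    Chain cs u (einv (ee v - 2 * k)) (dd + (k, k)) := by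
  induction k with
  | zero =>
    have h1 : einv (ee v - 2 * (0:ℕ)) = v := by
      rw [show ee v - 2 * ((0:ℕ):ℤ) = ee v by push_cast; ring, einv_ee]
    have h2 : dd + ((0:ℕ), (0:ℕ)) = dd := by ext <;> simp
    rw [h1, h2]; exact h
  | succ k ih =>
    have hs1 := S2 h0 h1 ih (by rw [ee_einv]; omega)
    rw [ee_einv] at hs1
    have hs2 := S1 h0 h1 hs1 (by rw [ee_einv]; omega)
    rw [ee_einv] at hs2
    have e1 : -(-(ee v - 2 * k) + 1) - 1 = ee v - 2 * (k+1 : ℕ) := by push_cast; ring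
    have e2 : dd + ((k:ℕ), (k:ℕ)) + (0, 1) + (1, 0) = dd + (k+1, k+1) := by
      ext <;> simp <;> omega
    rw [e1, e2] at hs2
    exact hs2

lemma reach_U (u : Dinf) (a b : ℕ) :
    Reachable cs u (a, b) (einv (UU (ee u) a b)) := by
  rcases lt_trichotomy (ee u) 0 with hx | hx | hx
  · by_cases hb : b = 0
    · refine ⟨0, by simp, ?_⟩
      have h5 : UU (ee u) a b = ee u := by
        unfold UU; rw [if_neg (by omega), if_pos hx, if_pos hb]
      rw [h5, einv_ee]
      exact Chain.refl u
    · have hz := zag h0 h1 (Chain.refl u (cs := cs)) (le_of_lt hx) (min a (b-1))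
      have hs := S2 h0 h1 hz (by rw [ee_einv]; omega)
      rw [ee_einv] at hs
      have e1 : -(ee u - 2 * (min a (b-1) : ℕ)) + 1 = UU (ee u) a b := by
        unfold UU; rw [if_neg (by omega), if_pos hx, if_neg hb]; push_cast; ring
      rw [e1] at hs
      exact ⟨_, ⟨by simp <;> omega, by simp <;> omega⟩, hs⟩
  · by_cases hab : a < b
    · have hz := zag h0 h1 (Chain.refl u (cs := cs)) (le_of_eq hx) a
      have hs := S2 h0 h1 hz (by rw [ee_einv]; omega)
      rw [ee_einv] at hs
      have e1 : -(ee u - 2 * (a:ℕ)) + 1 = UU (ee u) a b := by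
        unfold UU; rw [if_neg (by omega), if_neg (by omega), if_pos hab]; push_cast; omega
      rw [e1] at hs
      exact ⟨_, ⟨by simp, by simp <;> omega⟩, hs⟩
    · have hz := zig h0 h1 (Chain.refl u (cs := cs)) (le_of_eq hx.symm) b
      have e1 : ee u + 2 * (b:ℕ) = UU (ee u) a b := by
        unfold UU; rw [if_neg (by omega), if_neg (by omega), if_neg hab]; push_cast; omega
      rw [e1] at hz
      exact ⟨_, ⟨by simp <;> omega, by simp⟩, hz⟩
  · have hz := zig h0 h1 (Chain.refl u (cs := cs)) (le_of_lt hx) (min a b)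
    have e1 : ee u + 2 * (min a b : ℕ) = UU (ee u) a b := by
      unfold UU; rw [if_pos hx]
    rw [e1] at hz
    exact ⟨_, ⟨by simp <;> omega, by simp <;> omega⟩, hz⟩

lemma reach_D (u : Dinf) (a b : ℕ) :
    Reachable cs u (a, b) (einv (-(DD (ee u) a b))) := by
  rcases lt_trichotomy (ee u) 0 with hx | hx | hx
  · have hz := zag h0 h1 (Chain.refl u (cs := cs)) (le_of_lt hx) (min b a)
    have e1 : ee u - 2 * (min b a : ℕ) = -(DD (ee u) a b) := by
      unfold DD UU; rw [if_pos (by omega)]; push_cast; ring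
    rw [e1] at hz
    exact ⟨_, ⟨by simp <;> omega, by simp <;> omega⟩, hz⟩
  · by_cases hba : b < a
    · have hz := zig h0 h1 (Chain.refl u (cs := cs)) (le_of_eq hx.symm) b
      have hs := S1 h0 h1 hz (by rw [ee_einv]; omega)
      rw [ee_einv] at hs
      have e1 : -(ee u + 2 * (b:ℕ)) - 1 = -(DD (ee u) a b) := by
        unfold DD UU; rw [if_neg (by omega), if_neg (by omega), if_pos hba]; push_cast; omega
      rw [e1] at hs
      exact ⟨_, ⟨by simp <;> omega, by simp⟩, hs⟩
    · have hz := zag h0 h1 (Chain.refl u (cs := cs)) (le_of_eq hx) a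
      have e1 : ee u - 2 * (a:ℕ) = -(DD (ee u) a b) := by
        unfold DD UU; rw [if_neg (by omega), if_neg (by omega), if_neg hba]; push_cast; omega
      rw [e1] at hz
      exact ⟨_, ⟨by simp, by simp <;> omega⟩, hz⟩
  · by_cases ha : a = 0
    · refine ⟨0, by simp, ?_⟩
      have h5 : -(DD (ee u) a b) = ee u := by
        unfold DD UU; rw [if_neg (by omega), if_pos (by omega), if_pos ha]; ring
      rw [h5, einv_ee]
      exact Chain.refl u
    · have hz := zig h0 h1 (Chain.refl u (cs := cs)) (le_of_lt hx) (min b (a-1))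
      have hs := S1 h0 h1 hz (by rw [ee_einv]; omega)
      rw [ee_einv] at hs
      have e1 : -(ee u + 2 * (min b (a-1) : ℕ)) - 1 = -(DD (ee u) a b) := by
        unfold DD UU; rw [if_neg (by omega), if_pos (by omega), if_neg ha]; push_cast; ring
      rw [e1] at hs
      exact ⟨_, ⟨by simp <;> omega, by simp <;> omega⟩, hs⟩

lemma chain_mono {u v : Dinf} {dd : ℕ × ℕ} (h : Chain cs u v dd) :
    u = v ∨ cLength u < cLength v := by
  induction h with
  | refl => exact Or.inl rfl
  | @step v w dd α hc he hlen ih =>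
    right
    rw [len_eq cs h0 h1, len_eq cs h0 h1] at hlen
    rcases ih with h | h
    · rw [h]; exact hlen
    · omega

lemma lt_of_bruhatLT {v w : Dinf} (h : BruhatLT cs v w) : cLength v < cLength w := by
  obtain ⟨⟨dd, hc⟩, hne⟩ := h
  rcases chain_mono h0 h1 hc with h | h
  · exact absurd h hne
  · exact h

lemma bruhatLT_of_lt {v w : Dinf} (h : cLength v < cLength w) : BruhatLT cs v w := by
  rw [cLength_eq, cLength_eq] at h
  constructor
  · by_cases hpar : (ee v + ee w) % 2 = 0
    · set mid := einv ((ee v).natAbs + 1) with hmid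
      have hem : ee mid = (ee v).natAbs + 1 := ee_einv _
      have c1 := chain_snoc h0 h1 (Chain.refl v (cs := cs)) mid
        (by rw [hem]; omega) (by rw [hem]; omega)
      have c2 := chain_snoc h0 h1 c1 w (by rw [hem]; omega) (by rw [hem]; omega)
      exact ⟨_, c2⟩
    · exact ⟨_, chain_snoc h0 h1 (Chain.refl v (cs := cs)) w (by omega) (by omega)⟩
  · intro hvw
    rw [hvw] at h
    omega

end withcs
lemma mem_A (u : Dinf) (a b : ℕ) (w : Dinf) :
    (w ∈ enumerateD (a + b + 1) ∧ cLength (u * w) = cLength u + cLength w ∧ φ w ≤ (a, b)) ↔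
    Ep (ee u) a b (ee w) := by
  rw [mem_enum, φ_eq]
  unfold Ep
  simp only [cLength_eq, ee_mul, Prod.le_def]

lemma mem_CNC (u : Dinf) (a b : ℕ) (v : Dinf) :
    v ∈ CurveNeighborhoodComputable u (a, b) ↔
      ∃ w : Dinf, Ep (ee u) a b (ee w) ∧
        (∀ w' : Dinf, Ep (ee u) a b (ee w') → (ee w').natAbs ≤ (ee w).natAbs) ∧
        u * w = v := by
  unfold CurveNeighborhoodComputable
  simp only [Finset.mem_image, Finset.mem_filter]
  constructor
  · rintro ⟨w, ⟨⟨hw1, hw2⟩, hv⟩⟩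
    refine ⟨w, (mem_A u a b w).mp hw1, ?_, hv⟩
    intro w' hw'
    have h3 := hw2 w' ((mem_A u a b w').mpr hw')
    rw [cLength_eq, cLength_eq] at h3
    omega
  · rintro ⟨w, hw1, hw2, hv⟩
    refine ⟨w, ⟨⟨(mem_A u a b w).mpr hw1, ?_⟩, hv⟩⟩
    intro w' hw'
    have h3 := hw2 w' ((mem_A u a b w').mp hw')
    rw [cLength_eq, cLength_eq]
    omega

end CNaux

open CNaux in
/-- The computable curve neighborhood agrees with the abstract one. -/
theorem stmt18 (cs : CoxeterSystem Mmat Dinf)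
    (h0 : cs.simple 0 = sr 0) (h1 : cs.simple 1 = sr 1)
    (u : Dinf) (d : ℕ × ℕ) :
    (↑(CurveNeighborhoodComputable u d) : Set Dinf) =
      CurveNeighborhood cs u d := by
  obtain ⟨a, b⟩ := d
  apply Set.ext
  intro v
  rw [Finset.mem_coe, mem_CNC]
  have hU := wit_U (ee u) a b
  have hD := wit_D (ee u) a b
  have hbU := Ep_bound hU.1
  have hbD := Ep_bound hD.1
  constructor
  · rintro ⟨w, hw, hmax, rfl⟩
    have hbw := Ep_bound hw
    have hmaxU := hmax _ (by rw [ee_einv]; exact hU.1)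
    have hmaxD := hmax _ (by rw [ee_einv]; exact hD.1)
    rw [ee_einv] at hmaxU hmaxD
    have key : (zz (ee u) (ee w) = UU (ee u) a b ∧ DD (ee u) a b ≤ UU (ee u) a b) ∨
        (zz (ee u) (ee w) = -(DD (ee u) a b) ∧ UU (ee u) a b ≤ DD (ee u) a b) := by
      have e1 := hU.2
      have e2 := hD.2
      have e3 := hU.1.2.1
      have e4 := hD.1.2.1
      have e5 := hw.2.1
      omega
    constructor
    · rcases key with ⟨hz, _⟩ | ⟨hz, _⟩
      · have hveq : u * w = einv (UU (ee u) a b) := by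
          apply ee_inj; rw [ee_mul, ee_einv, hz]
        rw [hveq]
        exact reach_U h0 h1 u a b
      · have hveq : u * w = einv (-(DD (ee u) a b)) := by
          apply ee_inj; rw [ee_mul, ee_einv, hz]
        rw [hveq]
        exact reach_D h0 h1 u a b
    · intro v' hv' hbl
      have hlt := lt_of_bruhatLT h0 h1 hbl
      have hbv' := reach_bound h0 h1 hv'
      rw [cLength_eq, cLength_eq, ee_mul] at hlt
      have e5 := hw.2.1
      rcases key with ⟨hz, hdu⟩ | ⟨hz, hud⟩ <;> omega
  · rintro ⟨hre, hmax⟩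
    have hb := reach_bound h0 h1 hre
    have hnU : ¬ (cLength v < cLength (einv (UU (ee u) a b))) :=
      fun h => hmax _ (reach_U h0 h1 u a b) (bruhatLT_of_lt h0 h1 h)
    have hnD : ¬ (cLength v < cLength (einv (-(DD (ee u) a b)))) :=
      fun h => hmax _ (reach_D h0 h1 u a b) (bruhatLT_of_lt h0 h1 h)
    rw [cLength_eq, cLength_eq, ee_einv] at hnU hnD
    have key : ee v = UU (ee u) a b ∨ ee v = -(DD (ee u) a b) := by
      have e1 := hU.2
      have e2 := hD.2
      omega
    rcases key with hz | hz
    · refine ⟨einv (yU (ee u) a b), by rw [ee_einv]; exact hU.1, ?_, ?_⟩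
      · intro w' hw'
        have hbw' := Ep_bound hw'
        have e3 := hU.1.2.1
        have e4 := hw'.2.1
        have e1 := hU.2
        have e2 := hD.2
        rw [ee_einv]
        omega
      · apply ee_inj
        rw [ee_mul, ee_einv, hU.2, hz]
    · refine ⟨einv (yD (ee u) a b), by rw [ee_einv]; exact hD.1, ?_, ?_⟩
      · intro w' hw'
        have hbw' := Ep_bound hw'
        have e3 := hD.1.2.1
        have e4 := hw'.2.1
        have e1 := hU.2
        have e2 := hD.2
        rw [ee_einv]
        omega
      · apply ee_inj
        rw [ee_mul, ee_einv, hD.2, hz]
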